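/- arXiv:1512.08071 — 2 statements merged into one kernel-verified Lean document; each statement's English description precedes it below -/
import Mathlib

section
/- Let H : Σ → ℝ be continuous with summable variation, β > 0, and let Φ_β be the unique everywhere-positive continuous eigenfunction of the transfer operator L_β with max Φ_β = 1. Then V_β := −β^{−1} ln Φ_β satisfies min V_β = 0 and var(V_β, n) ≤ Σ_{k≥n+1} var(H,k) for every n ≥ 1 (that is, V_β ∈ 𝕂). -/
open MeasureTheory Filter Topology

/-- The one-sided full shift space on two symbols. -/
abbrev Sig : Type := ℕ → Fin 2

/-- The left shift map. -/
def shft : Sig → Sig := fun x n => x (n + 1)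

/-- Concatenation of a symbol with a configuration. -/
def cons2 (i : Fin 2) (x : Sig) : Sig := fun n => match n with
  | 0 => i
  | Nat.succ k => x k

/-- `x` and `y` agree on their first `n` coordinates. -/
def nClose (n : ℕ) (x y : Sig) : Prop := ∀ k, k < n → x k = y k

/-- The `n`-th variation of `H`. -/
noncomputable def Var (H : Sig → ℝ) (n : ℕ) : ℝ :=
  sSup {d : ℝ | ∃ x y : Sig, nClose n x y ∧ d = |H x - H y|}

/-- `H` has summable variation. -/
def SummableVar (H : Sig → ℝ) : Prop := Summable (fun n : ℕ => Var H (n + 1))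

/-- The transfer operator at inverse temperature `β`. -/
noncomputable def transfer (β : ℝ) (H : Sig → ℝ) (Φ : Sig → ℝ) : Sig → ℝ :=
  fun x => Real.exp (-β * H (cons2 0 x)) * Φ (cons2 0 x)
         + Real.exp (-β * H (cons2 1 x)) * Φ (cons2 1 x)

/-- The cylinder set determined by a finite word. -/
def cyl (w : List (Fin 2)) : Set Sig := {x | ∀ i : ℕ, ∀ h : i < w.length, x i = w.get ⟨i, h⟩}

/-- The fixed point `0^∞`. -/
def zpt : Sig := fun _ => 0

/-- The fixed point `1^∞`. -/
def opt : Sig := fun _ => 1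

/-- The minimizing ergodic value of `H`. -/
noncomputable def Hbar (H : Sig → ℝ) : ℝ :=
  sInf {r : ℝ | ∃ μ : Measure Sig, IsProbabilityMeasure μ ∧ μ.map shft = μ ∧ r = ∫ x, H x ∂μ}

/-- A minimizing measure for `H`. -/
def IsMinimizing (H : Sig → ℝ) (μ : Measure Sig) : Prop :=
  IsProbabilityMeasure μ ∧ μ.map shft = μ ∧
  ∀ ν : Measure Sig, IsProbabilityMeasure ν → ν.map shft = ν →
    ∫ x, H x ∂μ ≤ ∫ x, H x ∂ν

/-- The (topological) support of a measure. -/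
def mSupport (μ : Measure Sig) : Set Sig := {x | ∀ U : Set Sig, IsOpen U → x ∈ U → μ U ≠ 0}

/-- The Mather set of `H` : union of supports of minimizing measures. -/
def mather (H : Sig → ℝ) : Set Sig := {x | ∃ μ : Measure Sig, IsMinimizing H μ ∧ x ∈ mSupport μ}

/-- Birkhoff sum of the normalized potential. -/
noncomputable def birk (H : Sig → ℝ) (k : ℕ) (z : Sig) : ℝ :=
  ∑ i ∈ Finset.range k, (H (shft^[i] z) - Hbar H)

/-- The quantity `S_n^p(x,y)` (an infimum in `EReal`, `+∞` when the defining set is empty). -/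
noncomputable def SBar (H : Sig → ℝ) (p n : ℕ) (x y : Sig) : EReal :=
  sInf {s : EReal | ∃ k : ℕ, n ≤ k ∧ ∃ z : Sig, nClose p z x ∧ nClose p (shft^[k] z) y ∧
    s = (birk H k z : EReal)}

/-- The Peierls barrier `h(x,y)`; since `S_n^p(x,y)` is nondecreasing in both `n` and `p`,
the double limit is a double supremum. -/
noncomputable def peierls (H : Sig → ℝ) (x y : Sig) : EReal := ⨆ p : ℕ, ⨆ n : ℕ, SBar H p n x y

/-- The Lax-Oleinik operator (the two preimages of `y` under the shift are `0y` and `1y`). -/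
noncomputable def laxOleinik (H V : Sig → ℝ) : Sig → ℝ :=
  fun y => min (V (cons2 0 y) + H (cons2 0 y)) (V (cons2 1 y) + H (cons2 1 y))

/-- A calibrated sub-action of `H`. -/
def IsCalibrated (H V : Sig → ℝ) : Prop :=
  Continuous V ∧ laxOleinik H V = fun y => V y + Hbar H

/-- Membership in the class `𝕂`. -/
def InK (H V : Sig → ℝ) : Prop :=
  Continuous V ∧ ∀ n : ℕ, 1 ≤ n → Var V n ≤ ∑' k : ℕ, Var H (n + 1 + k)

/-- A reduced double-well type potential with data `(H_n^0)`, `(H_n^1)` (indexed from `n = 1`). -/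
structure ReducedDW (H : Sig → ℝ) (H0 H1 : ℕ → ℝ) : Prop where
  cont : Continuous H
  nonneg : ∀ x, 0 ≤ H x
  svar : SummableVar H
  zero : ∀ x ∈ cyl [0, 0] ∪ cyl [1, 1], H x = 0
  pos0 : ∀ n, 1 ≤ n → 0 < H0 n
  pos1 : ∀ n, 1 ≤ n → 0 < H1 n
  val0 : ∀ n, 1 ≤ n → ∀ x ∈ cyl (0 :: (List.replicate n 1 ++ [0])), H x = H0 n
  val1 : ∀ n, 1 ≤ n → ∀ x ∈ cyl (1 :: (List.replicate n 0 ++ [1])), H x = H1 n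
  bdd0 : ∀ k : ℕ, BddAbove (Set.range fun n : ℕ => |H0 (k + 1) - H0 (k + 1 + n)|)
  bdd1 : ∀ k : ℕ, BddAbove (Set.range fun n : ℕ => |H1 (k + 1) - H1 (k + 1 + n)|)
  sum0 : Summable (fun k : ℕ => ⨆ n : ℕ, |H0 (k + 1) - H0 (k + 1 + n)|)
  sum1 : Summable (fun k : ℕ => ⨆ n : ℕ, |H1 (k + 1) - H1 (k + 1 + n)|)

/-- A double-well type potential with data `a_n^0, a_n^1, b_n^0, b_n^1` (indexed from `n = 1`). -/
structure DW (H : Sig → ℝ) (a0 a1 b0 b1 : ℕ → ℝ) : Prop where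
  cont : Continuous H
  nonneg : ∀ x, 0 ≤ H x
  svar : SummableVar H
  anneg0 : ∀ n, 1 ≤ n → 0 ≤ a0 n
  anneg1 : ∀ n, 1 ≤ n → 0 ≤ a1 n
  bpos0 : ∀ n, 1 ≤ n → 0 < b0 n
  bpos1 : ∀ n, 1 ≤ n → 0 < b1 n
  vala0 : ∀ n, 1 ≤ n → ∀ x ∈ cyl (0 :: (List.replicate n 0 ++ [1])), H x = a0 n
  vala1 : ∀ n, 1 ≤ n → ∀ x ∈ cyl (1 :: (List.replicate n 1 ++ [0])), H x = a1 n
  valb0 : ∀ n, 1 ≤ n → ∀ x ∈ cyl (0 :: (List.replicate n 1 ++ [0])), H x = b0 n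
  valb1 : ∀ n, 1 ≤ n → ∀ x ∈ cyl (1 :: (List.replicate n 0 ++ [1])), H x = b1 n
  suma0 : Summable (fun n : ℕ => ((n + 1 : ℕ) : ℝ) * a0 (n + 1))
  suma1 : Summable (fun n : ℕ => ((n + 1 : ℕ) : ℝ) * a1 (n + 1))
  bddb0 : ∀ k : ℕ, BddAbove (Set.range fun n : ℕ => |b0 (k + 1) - b0 (k + 1 + n)|)
  bddb1 : ∀ k : ℕ, BddAbove (Set.range fun n : ℕ => |b1 (k + 1) - b1 (k + 1 + n)|)
  sumb0 : Summable (fun k : ℕ => ⨆ n : ℕ, |b0 (k + 1) - b0 (k + 1 + n)|)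
  sumb1 : Summable (fun k : ℕ => ⨆ n : ℕ, |b1 (k + 1) - b1 (k + 1 + n)|)

/-- The series `F_β(λ) = Σ_{k≥1} λ^{-k} e^{-β H_k}`. -/
noncomputable def Fser (β : ℝ) (Hs : ℕ → ℝ) (lam : ℝ) : ℝ :=
  ∑' k : ℕ, (lam ^ (k + 1))⁻¹ * Real.exp (-β * Hs (k + 1))

/-- The series `F̃_β(λ) = Σ_{k≥1} k λ^{-k} e^{-β H_k}`. -/
noncomputable def Ftser (β : ℝ) (Hs : ℕ → ℝ) (lam : ℝ) : ℝ :=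
  ∑' k : ℕ, ((k + 1 : ℕ) : ℝ) * (lam ^ (k + 1))⁻¹ * Real.exp (-β * Hs (k + 1))

/-- The data of the Ruelle-Perron-Frobenius solution and Gibbs measure at inverse temperature `β`:
eigenfunction `Φ` (positive, continuous, max 1), eigenvalue `lam`, eigenprobability `ν`,
and the Gibbs measure `μ = Φ ν / ∫ Φ dν`. -/
def GibbsData (H : Sig → ℝ) (β : ℝ) (Φ : Sig → ℝ) (lam : ℝ) (ν μ : Measure Sig) : Prop :=
  Continuous Φ ∧ (∀ x, 0 < Φ x) ∧ IsGreatest (Set.range Φ) 1 ∧ 0 < lam ∧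
  (transfer β H Φ = fun x => lam * Φ x) ∧
  IsProbabilityMeasure ν ∧
  (∀ f : Sig → ℝ, Continuous f → ∫ x, transfer β H f x ∂ν = lam * ∫ x, f x ∂ν) ∧
  μ = (ENNReal.ofReal (∫ x, Φ x ∂ν))⁻¹ • ν.withDensity (fun x => ENNReal.ofReal (Φ x))


section Aux

lemma varSet_nonempty (F : Sig → ℝ) (n : ℕ) :
    {d : ℝ | ∃ x y : Sig, nClose n x y ∧ d = |F x - F y|}.Nonempty :=
  ⟨0, zpt, zpt, fun _ _ => rfl, by simp⟩

lemma varSet_bddAbove {F : Sig → ℝ} (hF : Continuous F) (n : ℕ) :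
    BddAbove {d : ℝ | ∃ x y : Sig, nClose n x y ∧ d = |F x - F y|} := by
  obtain ⟨a, ha⟩ := (isCompact_range hF).bddBelow
  obtain ⟨b, hb⟩ := (isCompact_range hF).bddAbove
  refine ⟨b - a, ?_⟩
  rintro d ⟨x, y, -, rfl⟩
  have h1 : F x ≤ b := hb ⟨x, rfl⟩
  have h2 : F y ≤ b := hb ⟨y, rfl⟩
  have h3 : a ≤ F x := ha ⟨x, rfl⟩
  have h4 : a ≤ F y := ha ⟨y, rfl⟩
  rw [abs_sub_le_iff]
  constructor <;> linarith

lemma abs_sub_le_var {F : Sig → ℝ} (hF : Continuous F) {n : ℕ} {x y : Sig}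
    (h : nClose n x y) : |F x - F y| ≤ Var F n :=
  le_csSup (varSet_bddAbove hF n) ⟨x, y, h, rfl⟩

lemma var_nonneg {F : Sig → ℝ} (hF : Continuous F) (n : ℕ) : 0 ≤ Var F n := by
  have : |F zpt - F zpt| ≤ Var F n := abs_sub_le_var hF (fun _ _ => rfl)
  simpa using this

lemma var_le {F : Sig → ℝ} {n : ℕ} {c : ℝ}
    (h : ∀ x y : Sig, nClose n x y → |F x - F y| ≤ c) : Var F n ≤ c := by
  apply csSup_le (varSet_nonempty F n)
  rintro d ⟨x, y, hxy, rfl⟩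
  exact h x y hxy

lemma nClose_mono {m n : ℕ} (hmn : m ≤ n) {x y : Sig} (h : nClose n x y) :
    nClose m x y := fun k hk => h k (lt_of_lt_of_le hk hmn)

lemma var_mono {F : Sig → ℝ} (hF : Continuous F) {m n : ℕ} (hmn : m ≤ n) :
    Var F n ≤ Var F m :=
  var_le fun x y h => abs_sub_le_var hF (nClose_mono hmn h)

lemma nClose_cons {n : ℕ} {x y : Sig} (h : nClose n x y) (i : Fin 2) :
    nClose (n + 1) (cons2 i x) (cons2 i y) := by
  intro k hk
  cases k with
  | zero => rfl
  | succ k => exact h k (by omega)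

/-- Uniform continuity on the compact shift space: variations tend to `0`. -/
lemma exists_var_small {g : Sig → ℝ} (hg : Continuous g) {ε : ℝ} (hε : 0 < ε) :
    ∃ N : ℕ, Var g N ≤ ε := by
  by_contra hcon
  push_neg at hcon
  set K : ℕ → Set (Sig × Sig) :=
    fun N => {p | nClose N p.1 p.2 ∧ ε ≤ |g p.1 - g p.2|} with hK
  have hclosed : ∀ N, IsClosed (K N) := by
    intro N
    have h1 : IsClosed {p : Sig × Sig | nClose N p.1 p.2} := by
      have : {p : Sig × Sig | nClose N p.1 p.2}
          = ⋂ (k : ℕ) (_ : k < N), {p : Sig × Sig | p.1 k = p.2 k} := by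
        ext p; simp [nClose]
      rw [this]
      exact isClosed_iInter fun k => isClosed_iInter fun _ =>
        isClosed_eq ((continuous_apply k).comp continuous_fst)
          ((continuous_apply k).comp continuous_snd)
    have h2 : IsClosed {p : Sig × Sig | ε ≤ |g p.1 - g p.2|} :=
      isClosed_le continuous_const
        (((hg.comp continuous_fst).sub (hg.comp continuous_snd)).abs)
    exact h1.inter h2
  have hne : ∀ N, (K N).Nonempty := by
    intro N
    by_contra hemp
    rw [Set.not_nonempty_iff_eq_empty] at hemp
    have : Var g N ≤ ε := by
      apply var_le
      intro x y hxy
      by_contra hgt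
      push_neg at hgt
      exact Set.eq_empty_iff_forall_notMem.1 hemp (x, y) ⟨hxy, le_of_lt hgt⟩
    exact absurd this (not_le.2 (hcon N))
  have hsub : ∀ N, K (N + 1) ⊆ K N := by
    rintro N p ⟨h1, h2⟩
    exact ⟨nClose_mono (Nat.le_succ N) h1, h2⟩
  have hcpt : ∀ N, IsCompact (K N) := fun N => (hclosed N).isCompact
  obtain ⟨⟨x, y⟩, hxy⟩ := IsCompact.nonempty_iInter_of_sequence_nonempty_isCompact_isClosed
    K hsub hne (hcpt 0) hclosed
  have hxy' : x = y := by
    funext k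
    exact (Set.mem_iInter.1 hxy (k + 1)).1 k (by omega)
  have := (Set.mem_iInter.1 hxy 0).2
  rw [hxy'] at this
  simp at this
  linarith

lemma key_rec {H : Sig → ℝ} (hHc : Continuous H) {β : ℝ} (hβ : 0 < β)
    {Φ : Sig → ℝ} (hΦc : Continuous Φ) (hΦpos : ∀ x, 0 < Φ x) {lam : ℝ} (hlam : 0 < lam)
    (heig : transfer β H Φ = fun x => lam * Φ x) (n : ℕ) :
    Var (fun x => Real.log (Φ x)) n
      ≤ β * Var H (n + 1) + Var (fun x => Real.log (Φ x)) (n + 1) := by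
  set g : Sig → ℝ := fun x => Real.log (Φ x) with hg
  have hgc : Continuous g := hΦc.log fun x => (hΦpos x).ne'
  set v : ℝ := Var H (n + 1) with hv
  set D : ℝ := Var g (n + 1) with hD
  have main : ∀ x y : Sig, nClose n x y → g x - g y ≤ β * v + D := by
    intro x y hxy
    have hterm : ∀ i : Fin 2,
        Real.exp (-β * H (cons2 i x)) * Φ (cons2 i x)
          ≤ Real.exp (β * v + D) * (Real.exp (-β * H (cons2 i y)) * Φ (cons2 i y)) := by
      intro i
      have hci := nClose_cons hxy i
      have hH : |H (cons2 i x) - H (cons2 i y)| ≤ v := abs_sub_le_var hHc hci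
      have hH2 : H (cons2 i y) - H (cons2 i x) ≤ v := by
        have := abs_le.1 hH; linarith [this.1]
      have h1 : Real.exp (-β * H (cons2 i x))
          ≤ Real.exp (β * v) * Real.exp (-β * H (cons2 i y)) := by
        rw [← Real.exp_add]
        apply Real.exp_le_exp.2
        nlinarith
      have hgle : g (cons2 i x) - g (cons2 i y) ≤ D := by
        have := abs_le.1 (abs_sub_le_var hgc hci); exact this.2
      have h2 : Φ (cons2 i x) ≤ Real.exp D * Φ (cons2 i y) := by
        have e1 : Φ (cons2 i x) = Real.exp (g (cons2 i x)) :=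
          (Real.exp_log (hΦpos _)).symm
        have e2 : Φ (cons2 i y) = Real.exp (g (cons2 i y)) :=
          (Real.exp_log (hΦpos _)).symm
        rw [e1, e2, ← Real.exp_add]
        exact Real.exp_le_exp.2 (by linarith)
      calc Real.exp (-β * H (cons2 i x)) * Φ (cons2 i x)
          ≤ (Real.exp (β * v) * Real.exp (-β * H (cons2 i y)))
              * (Real.exp D * Φ (cons2 i y)) := by
            apply mul_le_mul h1 h2 (le_of_lt (hΦpos _))
            positivity
        _ = Real.exp (β * v + D) * (Real.exp (-β * H (cons2 i y)) * Φ (cons2 i y)) := by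
            rw [Real.exp_add]; ring
    have e0 := congrFun heig x
    have e1 := congrFun heig y
    simp only [transfer] at e0 e1
    have hsum : lam * Φ x ≤ Real.exp (β * v + D) * (lam * Φ y) := by
      rw [← e0, ← e1]
      have := hterm 0
      have := hterm 1
      rw [mul_add]
      exact add_le_add (hterm 0) (hterm 1)
    have hΦle : Φ x ≤ Real.exp (β * v + D) * Φ y := by
      have h : lam * Φ x ≤ lam * (Real.exp (β * v + D) * Φ y) := by
        calc lam * Φ x ≤ Real.exp (β * v + D) * (lam * Φ y) := hsum
          _ = lam * (Real.exp (β * v + D) * Φ y) := by ring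
      exact le_of_mul_le_mul_left h hlam
    have hlog : Real.log (Φ x) ≤ Real.log (Real.exp (β * v + D) * Φ y) :=
      Real.log_le_log (hΦpos x) hΦle
    rw [Real.log_mul (Real.exp_ne_zero _) (hΦpos y).ne', Real.log_exp] at hlog
    simp only [hg]
    linarith
  apply var_le
  intro x y hxy
  rw [abs_sub_le_iff]
  exact ⟨main x y hxy, main y x fun k hk => (hxy k hk).symm⟩

end Aux

/-- `V_β = -β⁻¹ ln Φ_β` has minimum `0` and belongs to `𝕂`. -/
theorem stmt_1 (H : Sig → ℝ) (hHc : Continuous H) (hHv : SummableVar H)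
    (β : ℝ) (hβ : 0 < β) (Φ : Sig → ℝ) (lam : ℝ)
    (hΦc : Continuous Φ) (hΦpos : ∀ x, 0 < Φ x) (hΦmax : IsGreatest (Set.range Φ) 1)
    (hlam : 0 < lam) (heig : transfer β H Φ = fun x => lam * Φ x) :
    IsLeast (Set.range fun x => -(1 / β) * Real.log (Φ x)) 0 ∧
    ∀ n : ℕ, 1 ≤ n →
      Var (fun x => -(1 / β) * Real.log (Φ x)) n ≤ ∑' k : ℕ, Var H (n + 1 + k) := by
  have hgc : Continuous (fun x => Real.log (Φ x)) := hΦc.log fun x => (hΦpos x).ne'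
  set g : Sig → ℝ := fun x => Real.log (Φ x) with hg
  constructor
  · constructor
    · obtain ⟨x₀, hx₀⟩ := hΦmax.1
      exact ⟨x₀, by simp [hx₀]⟩
    · rintro r ⟨x, rfl⟩
      have h1 : Φ x ≤ 1 := hΦmax.2 ⟨x, rfl⟩
      have h2 : Real.log (Φ x) ≤ 0 := Real.log_nonpos (le_of_lt (hΦpos x)) h1
      have : 0 < 1 / β := by positivity
      nlinarith
  · intro n hn
    -- summability of the tail
    have hsum : Summable (fun k : ℕ => Var H (n + 1 + k)) := by
      have h1 : Summable (fun k : ℕ => Var H (k + n + 1)) := by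
        have := (summable_nat_add_iff n).2 hHv
        exact this.congr fun k => rfl
      apply h1.congr
      intro k
      congr 1
      omega
    set T : ℝ := ∑' k : ℕ, Var H (n + 1 + k) with hT
    -- step: Var g n ≤ β * T
    have hind : ∀ m : ℕ, Var g n ≤ β * (∑ k ∈ Finset.range m, Var H (n + 1 + k)) + Var g (n + m) := by
      intro m
      induction m with
      | zero => simp
      | succ m ih =>
        have hkey := key_rec hHc hβ hΦc hΦpos hlam heig (n + m)
        rw [Finset.sum_range_succ]
        have he : Var H (n + m + 1) = Var H (n + 1 + m) := by congr 1; omega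
        rw [he] at hkey
        have : n + (m + 1) = n + m + 1 := by omega
        rw [this]
        calc Var g n ≤ β * (∑ k ∈ Finset.range m, Var H (n + 1 + k)) + Var g (n + m) := ih
          _ ≤ β * (∑ k ∈ Finset.range m, Var H (n + 1 + k))
              + (β * Var H (n + 1 + m) + Var g (n + m + 1)) := by linarith
          _ = β * ((∑ k ∈ Finset.range m, Var H (n + 1 + k)) + Var H (n + 1 + m))
              + Var g (n + m + 1) := by ring
    have hgT : Var g n ≤ β * T := by
      apply le_of_forall_pos_le_add
      intro ε hε
      obtain ⟨N, hN⟩ := exists_var_small hgc hε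
      have hpart : ∑ k ∈ Finset.range N, Var H (n + 1 + k) ≤ T :=
        Summable.sum_le_tsum (Finset.range N) (fun k _ => var_nonneg hHc _) hsum
      have hmono : Var g (n + N) ≤ Var g N := var_mono hgc (by omega)
      calc Var g n ≤ β * (∑ k ∈ Finset.range N, Var H (n + 1 + k)) + Var g (n + N) := hind N
        _ ≤ β * T + ε := by nlinarith [hN, hmono]
    apply var_le
    intro x y hxy
    have h1 : |g x - g y| ≤ β * T := le_trans (abs_sub_le_var hgc hxy) hgT
    have h2 : |(-(1 / β) * Real.log (Φ x)) - (-(1 / β) * Real.log (Φ y))|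
        = (1 / β) * |g x - g y| := by
      rw [show (-(1 / β) * Real.log (Φ x)) - (-(1 / β) * Real.log (Φ y))
          = -(1 / β) * (g x - g y) by simp [hg]; ring]
      rw [abs_mul, abs_neg, abs_of_pos (by positivity : (0:ℝ) < 1 / β)]
    rw [h2]
    calc (1 / β) * |g x - g y| ≤ (1 / β) * (β * T) := by
          apply mul_le_mul_of_nonneg_left h1 (by positivity)
      _ = T := by field_simp
end

section
/- If H : Σ → ℝ is continuous with summable variation, then Mather(H) ⊆ { x ∈ Σ : h(x,x) = 0 }, where h is the Peierls barrier of H. -/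
open MeasureTheory Filter Topology

/-!
Both `h(x, x) ≥ 0` and `h(x, x) ≤ 0` are estimates on Birkhoff sums of `H - Hbar H`.

If `z` and `σ^k z` are `p`-close, then `z` is `(k + p - i)`-close, after `i < k` shifts, to the
`k`-periodic point with the same first `k` symbols. The periodic orbit carries an invariant
probability measure, so its Birkhoff sum is nonnegative, and the shadowing error is at most
`∑_{m > p} var(H, m)`. This bounds `S_n^p(x, x)` below by a quantity tending to `0`.

For the upper bound (Atkinson's lemma), let `μ` be minimizing with `x` in its support, so the
cylinder `A = [x]_p` has positive measure. Birkhoff sums are uniformly bounded below by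
`-∑_{m ≥ 1} var(H, m)` and have `μ`-integral `0`, so the set where some sum up to time `K` exceeds
`R` has measure `O(1/R)`. If every return from `A` to `A` after at least `n` steps had sum `≥ ε`,
Poincaré recurrence would make the sums unbounded on almost all of `A`, forcing `μ A = 0`.
-/

lemma continuous_shft : Continuous shft := continuous_pi fun n => continuous_apply (n + 1)

lemma measurable_shft : Measurable shft := continuous_shft.measurable

lemma shft_iterate_apply (i : ℕ) (z : Sig) (j : ℕ) : shft^[i] z j = z (j + i) := by
  induction i generalizing z with
  | zero => rfl
  | succ i ih => rw [Function.iterate_succ_apply, ih]; rfl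

lemma isOpen_setOf_nClose (p : ℕ) (x : Sig) : IsOpen {z | nClose p z x} := by
  have : {z | nClose p z x} = ⋂ k ∈ Finset.range p, (fun z : Sig => z k) ⁻¹' {x k} := by
    ext z; simp [nClose]
  rw [this]
  exact isOpen_biInter_finset fun k _ => (isOpen_discrete _).preimage (continuous_apply k)

lemma Continuous.integrable_of_compactSpace {X E : Type*} [TopologicalSpace X] [CompactSpace X]
    [MeasurableSpace X] [OpensMeasurableSpace X] [NormedAddCommGroup E] {f : X → E}
    (hf : Continuous f) (μ : Measure X) [IsFiniteMeasure μ] : Integrable f μ :=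
  hf.integrable_of_hasCompactSupport (HasCompactSupport.of_compactSpace f)

lemma abs_sub_le_Var {H : Sig → ℝ} (hHc : Continuous H) {m : ℕ} {u v : Sig}
    (h : nClose m u v) : |H u - H v| ≤ Var H m := by
  have hbdd : BddAbove {d : ℝ | ∃ x y : Sig, nClose m x y ∧ d = |H x - H y|} := by
    have hcont : Continuous fun q : Sig × Sig => |H q.1 - H q.2| := by fun_prop
    refine (isCompact_range hcont).bddAbove.mono ?_
    rintro _ ⟨x, y, -, rfl⟩
    exact ⟨(x, y), rfl⟩
  exact le_csSup hbdd ⟨u, v, h, rfl⟩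

lemma Var_nonneg {H : Sig → ℝ} (hHc : Continuous H) (m : ℕ) : 0 ≤ Var H m :=
  (abs_nonneg _).trans (abs_sub_le_Var hHc (fun _ _ => rfl : nClose m zpt zpt))

noncomputable def varTail (H : Sig → ℝ) (p : ℕ) : ℝ := ∑' m : ℕ, Var H (m + p + 1)

lemma varTail_nonneg {H : Sig → ℝ} (hHc : Continuous H) (p : ℕ) : 0 ≤ varTail H p :=
  tsum_nonneg fun _ => Var_nonneg hHc _

lemma tendsto_varTail (H : Sig → ℝ) : Tendsto (varTail H) atTop (𝓝 0) :=
  tendsto_sum_nat_add fun n => Var H (n + 1)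

lemma sum_range_Var_le_varTail {H : Sig → ℝ} (hHc : Continuous H) (hHv : SummableVar H)
    (k p : ℕ) : ∑ i ∈ Finset.range k, Var H (i + p + 1) ≤ varTail H p :=
  ((summable_nat_add_iff p).2 hHv).sum_le_tsum _ fun _ _ => Var_nonneg hHc _

lemma Hbar_le_integral {H : Sig → ℝ} (hHc : Continuous H) (μ : Measure Sig)
    [IsProbabilityMeasure μ] (hμ : μ.map shft = μ) : Hbar H ≤ ∫ x, H x ∂μ := by
  obtain ⟨b, hb⟩ := (isCompact_range hHc).bddBelow
  refine csInf_le ⟨b, ?_⟩ ⟨μ, inferInstance, hμ, rfl⟩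
  rintro _ ⟨ν, hν, -, rfl⟩
  calc b = ∫ _, b ∂ν := by simp
    _ ≤ ∫ x, H x ∂ν :=
      integral_mono (integrable_const _) (hHc.integrable_of_compactSpace ν) fun x => hb ⟨x, rfl⟩

lemma IsMinimizing.integral_eq_Hbar {H : Sig → ℝ} (hHc : Continuous H) {μ : Measure Sig}
    (hμ : IsMinimizing H μ) : ∫ x, H x ∂μ = Hbar H := by
  have := hμ.1
  refine le_antisymm ?_ (Hbar_le_integral hHc μ hμ.2.1)
  refine le_csInf ⟨_, μ, hμ.1, hμ.2.1, rfl⟩ ?_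
  rintro _ ⟨ν, hν, hνinv, rfl⟩
  exact hμ.2.2 ν hν hνinv

lemma Finset.sum_range_shift_of_eq {M : Type*} [AddCommMonoid M] (g : ℕ → M) {k : ℕ}
    (h : g k = g 0) : ∑ i ∈ Finset.range k, g (i + 1) = ∑ i ∈ Finset.range k, g i := by
  cases k with
  | zero => simp
  | succ m => rw [Finset.sum_range_succ, h, Finset.sum_range_succ' g]

lemma map_sum_dirac_iterate_of_periodic {α : Type*} [MeasurableSpace α] {f : α → α}
    (hf : Measurable f) {k : ℕ} {w : α} (hw : f^[k] w = w) :
    (∑ i ∈ Finset.range k, Measure.dirac (f^[i] w)).map f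
      = ∑ i ∈ Finset.range k, Measure.dirac (f^[i] w) := by
  rw [Measure.map_finset_sum hf.aemeasurable]
  simp only [Measure.map_dirac' hf, ← Function.iterate_succ_apply' f]
  exact Finset.sum_range_shift_of_eq (fun i => Measure.dirac (f^[i] w)) (by rw [hw]; rfl)

lemma birk_add (H : Sig → ℝ) (a b : ℕ) (z : Sig) :
    birk H (a + b) z = birk H a z + birk H b (shft^[a] z) := by
  simp only [birk, Finset.sum_range_add, ← Function.iterate_add_apply, add_comm]

lemma continuous_birk {H : Sig → ℝ} (hHc : Continuous H) (k : ℕ) : Continuous (birk H k) :=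
  continuous_finsetSum _ fun i _ => (hHc.comp (continuous_shft.iterate i)).sub continuous_const

lemma birk_nonneg_of_periodic {H : Sig → ℝ} (hHc : Continuous H) {k : ℕ} (hk : k ≠ 0)
    {w : Sig} (hw : shft^[k] w = w) : 0 ≤ birk H k w := by
  set μ : Measure Sig := (k : ENNReal)⁻¹ • ∑ i ∈ Finset.range k, Measure.dirac (shft^[i] w)
  have hμ : IsProbabilityMeasure μ := by
    constructor
    simp [μ, ENNReal.inv_mul_cancel (Nat.cast_ne_zero.2 hk) (ENNReal.natCast_ne_top k)]
  have hint : ∫ x, H x ∂μ = (k : ℝ)⁻¹ * ∑ i ∈ Finset.range k, H (shft^[i] w) := by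
    rw [integral_smul_measure,
      integral_finsetSum_measure fun i _ => hHc.integrable_of_compactSpace _]
    simp [integral_dirac]
  have hle := Hbar_le_integral hHc μ
    (by rw [Measure.map_smul, map_sum_dirac_iterate_of_periodic measurable_shft hw])
  rw [hint] at hle
  have hk' : (0 : ℝ) < k := by positivity
  simp only [birk, Finset.sum_sub_distrib, Finset.sum_const, Finset.card_range, nsmul_eq_mul]
  rw [le_inv_mul_iff₀ hk'] at hle
  linarith

lemma nClose_periodize {z : Sig} {k p : ℕ} (hz : nClose p (shft^[k] z) z) :
    nClose (k + p) z (fun j => z (j % k)) := by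
  rcases eq_or_ne k 0 with rfl | hk
  · intro j _
    simp
  intro j
  induction j using Nat.strong_induction_on with
  | _ j ih =>
    intro hj
    show z j = z (j % k)
    rcases Nat.lt_or_ge j k with h | h
    · rw [Nat.mod_eq_of_lt h]
    · have hzj := hz (j - k) (by omega)
      rw [shft_iterate_apply, Nat.sub_add_cancel h] at hzj
      rw [hzj, ih (j - k) (by omega) (by omega), Nat.mod_eq_sub_mod h]

lemma neg_varTail_le_birk {H : Sig → ℝ} (hHc : Continuous H) (hHv : SummableVar H) {z : Sig}
    {k p : ℕ} (hz : nClose p (shft^[k] z) z) : -varTail H p ≤ birk H k z := by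
  rcases eq_or_ne k 0 with rfl | hk
  · simpa [birk] using varTail_nonneg hHc p
  set w : Sig := fun j => z (j % k)
  have hw : shft^[k] w = w := funext fun j => by simp [w, shft_iterate_apply]
  have hterm : ∀ i ∈ Finset.range k,
      H (shft^[i] w) - Hbar H - Var H (k - 1 - i + p + 1) ≤ H (shft^[i] z) - Hbar H := by
    intro i hi
    have hclose : nClose (k - 1 - i + p + 1) (shft^[i] z) (shft^[i] w) := fun j hj => by
      simp only [shft_iterate_apply]
      exact nClose_periodize hz _ (by have := Finset.mem_range.1 hi; omega)
    linarith [(abs_le.1 (abs_sub_le_Var hHc hclose)).1]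
  calc -varTail H p ≤ birk H k w - ∑ i ∈ Finset.range k, Var H (i + p + 1) := by
        linarith [birk_nonneg_of_periodic hHc hk hw, sum_range_Var_le_varTail hHc hHv k p]
    _ = ∑ i ∈ Finset.range k, (H (shft^[i] w) - Hbar H - Var H (k - 1 - i + p + 1)) := by
        rw [Finset.sum_sub_distrib, birk,
          ← Finset.sum_range_reflect (fun i => Var H (i + p + 1))]
    _ ≤ birk H k z := Finset.sum_le_sum hterm

lemma IsMinimizing.integral_birk {H : Sig → ℝ} (hHc : Continuous H) {μ : Measure Sig}
    (hμ : IsMinimizing H μ) (k : ℕ) : ∫ z, birk H k z ∂μ = 0 := by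
  have := hμ.1
  have hmp : MeasurePreserving shft μ μ := ⟨measurable_shft, hμ.2.1⟩
  have hi : ∀ i, ∫ z, H (shft^[i] z) ∂μ = Hbar H := fun i => by
    rw [← integral_map (hmp.iterate i).measurable.aemeasurable hHc.aestronglyMeasurable,
      (hmp.iterate i).map_eq, hμ.integral_eq_Hbar hHc]
  have hint : ∀ i, Integrable (fun z => H (shft^[i] z)) μ := fun i =>
    (hHc.comp (continuous_shft.iterate i)).integrable_of_compactSpace μ
  unfold birk
  rw [integral_finsetSum _ (f := fun i z => H (shft^[i] z) - Hbar H)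
    fun i _ => (hint i).sub (integrable_const _)]
  refine Finset.sum_eq_zero fun i _ => ?_
  rw [integral_sub (hint i) (integrable_const _), hi, integral_const]
  simp

lemma IsMinimizing.mul_measureReal_le_varTail {H : Sig → ℝ} (hHc : Continuous H)
    (hHv : SummableVar H) {μ : Measure Sig} (hμ : IsMinimizing H μ) (K : ℕ) (R : ℝ) :
    R * μ.real {z | ∃ j ≤ K, R ≤ birk H j z} ≤ varTail H 0 := by
  have := hμ.1
  set E := {z | ∃ j ≤ K, R ≤ birk H j z}
  have hE : MeasurableSet E := by
    simp only [E, Set.ofPred_exists]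
    exact MeasurableSet.iUnion fun j => (MeasurableSet.const (j ≤ K)).inter
      (measurableSet_le measurable_const (continuous_birk hHc j).measurable)
  have hC : ∀ j y, -varTail H 0 ≤ birk H j y := fun j y =>
    neg_varTail_le_birk hHc hHv fun _ h => absurd h (Nat.not_lt_zero _)
  have hlow : ∀ z, E.indicator (fun _ => R) z - varTail H 0 ≤ birk H K z := by
    intro z
    by_cases hz : z ∈ E
    · obtain ⟨j, hj, hR⟩ := id hz
      have hsplit : birk H K z = birk H j z + birk H (K - j) (shft^[j] z) := by
        rw [← birk_add, Nat.add_sub_cancel' hj]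
      rw [Set.indicator_of_mem hz, hsplit]
      linarith [hC (K - j) (shft^[j] z)]
    · rw [Set.indicator_of_notMem hz]
      linarith [hC K z]
  have hint : ∫ z, (E.indicator (fun _ => R) z - varTail H 0) ∂μ ≤ ∫ z, birk H K z ∂μ :=
    integral_mono (((integrable_const R).indicator hE).sub (integrable_const _))
    ((continuous_birk hHc K).integrable_of_compactSpace μ) hlow
  rw [hμ.integral_birk hHc, integral_sub ((integrable_const R).indicator hE) (integrable_const _),
    integral_indicator_const _ hE, integral_const] at hint
  simp only [smul_eq_mul, probReal_univ, one_mul] at hint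
  linarith

lemma exists_birk_ge_of_frequently_mem {H : Sig → ℝ} {A : Set Sig} {n : ℕ} {ε : ℝ}
    (hret : ∀ k ≥ n, ∀ z ∈ A, shft^[k] z ∈ A → ε ≤ birk H k z) {z : Sig} (hz : z ∈ A)
    (hfreq : ∃ᶠ m in atTop, shft^[m] z ∈ A) (m : ℕ) :
    ∃ t, shft^[t] z ∈ A ∧ m * ε ≤ birk H t z := by
  induction m with
  | zero => exact ⟨0, hz, by simp [birk]⟩
  | succ m ih =>
    obtain ⟨t, ht, hbt⟩ := ih
    obtain ⟨M, hM, hMA⟩ := frequently_atTop.1 hfreq (t + n)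
    have hreturn : shft^[M - t] (shft^[t] z) ∈ A := by
      rwa [← Function.iterate_add_apply, Nat.sub_add_cancel (by omega)]
    have hstep := hret (M - t) (by omega) _ ht hreturn
    refine ⟨t + (M - t), ?_, ?_⟩
    · rwa [add_comm, Function.iterate_add_apply]
    · rw [birk_add]
      push_cast
      linarith

theorem IsMinimizing.exists_iterate_mem_birk_lt {H : Sig → ℝ} (hHc : Continuous H)
    (hHv : SummableVar H) {μ : Measure Sig} (hμ : IsMinimizing H μ) {A : Set Sig}
    (hA : MeasurableSet A) (hA0 : μ A ≠ 0) (n : ℕ) {ε : ℝ} (hε : 0 < ε) :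
    ∃ k ≥ n, ∃ z ∈ A, shft^[k] z ∈ A ∧ birk H k z < ε := by
  by_contra! hret
  have := hμ.1
  set C := varTail H 0
  have hC : 0 ≤ C := varTail_nonneg hHc 0
  have hAreal : 0 < μ.real A := ENNReal.toReal_pos hA0 (measure_ne_top μ A)
  set R := (C + 1) / μ.real A
  have hR : 0 < R := div_pos (by linarith) hAreal
  set E : ℕ → Set Sig := fun K => {z | ∃ j ≤ K, R ≤ birk H j z}
  have hcover : A ≤ᵐ[μ] ⋃ K, E K := by
    have hrec := (MeasurePreserving.mk measurable_shft hμ.2.1).conservative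
      |>.ae_mem_imp_frequently_image_mem hA.nullMeasurableSet
    filter_upwards [hrec] with z hfreq hz
    obtain ⟨t, -, ht⟩ := exists_birk_ge_of_frequently_mem hret hz (hfreq hz) ⌈R / ε⌉₊
    exact Set.mem_iUnion.2 ⟨t, t, le_rfl, ((div_le_iff₀ hε).1 (Nat.le_ceil _)).trans ht⟩
  have hE : ∀ K, μ (E K) ≤ ENNReal.ofReal (C / R) := fun K => by
    rw [ENNReal.le_ofReal_iff_toReal_le (measure_ne_top _ _) (div_nonneg hC hR.le),
      le_div_iff₀ hR, mul_comm]
    exact hμ.mul_measureReal_le_varTail hHc hHv K R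
  have hAle : μ A ≤ ENNReal.ofReal (C / R) :=
    calc μ A ≤ μ (⋃ K, E K) := measure_mono_ae hcover
      _ = ⨆ K, μ (E K) :=
        Monotone.measure_iUnion fun a b hab z ⟨j, hj, h⟩ => ⟨j, hj.trans hab, h⟩
      _ ≤ _ := iSup_le hE
  have hAreal_le : μ.real A ≤ C / R :=
    ENNReal.toReal_le_of_le_ofReal (div_nonneg hC hR.le) hAle
  rw [le_div_iff₀ hR] at hAreal_le
  have : μ.real A * R = C + 1 := by
    simp only [R]
    field_simp
  linarith

lemma SBar_nonpos_of_mem_mather {H : Sig → ℝ} (hHc : Continuous H) (hHv : SummableVar H)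
    {x : Sig} (hx : x ∈ mather H) (p n : ℕ) : SBar H p n x x ≤ 0 := by
  obtain ⟨μ, hμ, hxμ⟩ := hx
  have hA0 := hxμ _ (isOpen_setOf_nClose p x) (fun _ _ => rfl)
  refine le_of_forall_gt_imp_ge_of_dense fun a ha => ?_
  obtain ⟨ε, hε, hεa⟩ := EReal.exists_between_coe_real ha
  obtain ⟨k, hk, z, hz, hkz, hlt⟩ := hμ.exists_iterate_mem_birk_lt hHc hHv
    (isOpen_setOf_nClose p x).measurableSet hA0 n (EReal.coe_pos.1 hε)
  have hSBar : SBar H p n x x ≤ (birk H k z : EReal) := sInf_le ⟨k, hk, z, hz, hkz, rfl⟩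
  exact hSBar.trans ((EReal.coe_le_coe_iff.2 hlt.le).trans hεa.le)

lemma neg_varTail_le_SBar {H : Sig → ℝ} (hHc : Continuous H) (hHv : SummableVar H)
    (p n : ℕ) (x : Sig) : ((-varTail H p : ℝ) : EReal) ≤ SBar H p n x x := by
  refine le_sInf ?_
  rintro _ ⟨k, -, z, hz, hkz, rfl⟩
  exact EReal.coe_le_coe_iff.2
    (neg_varTail_le_birk hHc hHv fun j hj => (hkz j hj).trans (hz j hj).symm)

/-- the Mather set is contained in the zero set of the diagonal Peierls barrier. -/
theorem stmt_5 (H : Sig → ℝ) (hHc : Continuous H) (hHv : SummableVar H) :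
    mather H ⊆ {x : Sig | peierls H x x = 0} := by
  intro x hx
  refine le_antisymm (iSup₂_le fun p n => SBar_nonpos_of_mem_mather hHc hHv hx p n) ?_
  have hlim : Tendsto (fun p => ((-varTail H p : ℝ) : EReal)) atTop (𝓝 0) := by
    rw [← EReal.coe_zero, EReal.tendsto_coe, ← neg_zero]
    exact (tendsto_varTail H).neg
  exact le_of_tendsto' hlim fun p => (neg_varTail_le_SBar hHc hHv p 0 x).trans
    (le_iSup₂ (f := fun p n => SBar H p n x x) p 0)
end
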